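/- arXiv:2502.11302 — 9 statements merged into one kernel-verified Lean document; each statement's English description precedes it below -/
import Mathlib

section
/- Let A and B be real q×m matrices and let ε ≥ 0 satisfy ‖A − B‖ ≤ ε. Then AAᵀ and BBᵀ are positive semidefinite, and their unique positive semidefinite square roots satisfy ‖(AAᵀ)^{1/2} − (BBᵀ)^{1/2}‖ ≤ (ε(ε + 2‖B‖))^{1/2}. -/
open Matrix
open scoped Matrix.Norms.L2Operator



lemma aux_dot {q : ℕ} (N : Matrix (Fin q) (Fin q) ℝ) (v : Fin q → ℝ)
    (hv : v ⬝ᵥ v = 1) : v ⬝ᵥ (N *ᵥ v) ≤ ‖N‖ := by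
  set u : EuclideanSpace ℝ (Fin q) := (WithLp.equiv 2 _).symm v with hu
  have hnu : ‖u‖ = 1 := by
    have : ‖u‖ ^ 2 = 1 := by
      rw [← real_inner_self_eq_norm_sq, PiLp.inner_apply]
      simpa [u, dotProduct, sq] using hv
    nlinarith [norm_nonneg u]
  have h1 : v ⬝ᵥ (N *ᵥ v) = inner ℝ u ((WithLp.equiv 2 _).symm (N *ᵥ v) : EuclideanSpace ℝ (Fin q)) := by
    simp [PiLp.inner_apply, u, dotProduct, mul_comm]
  rw [h1]
  calc inner ℝ u ((WithLp.equiv 2 _).symm (N *ᵥ v) : EuclideanSpace ℝ (Fin q))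
      ≤ ‖u‖ * ‖((WithLp.equiv 2 _).symm (N *ᵥ v) : EuclideanSpace ℝ (Fin q))‖ := real_inner_le_norm _ _
    _ ≤ ‖u‖ * (‖N‖ * ‖u‖) := by
        gcongr
        exact N.l2_opNorm_mulVec u
    _ = ‖N‖ := by rw [hnu]; ring

lemma aux_eig {q : ℕ} (S T : Matrix (Fin q) (Fin q) ℝ) (hS : S.PosSemidef) (hT : T.PosSemidef)
    (v : Fin q → ℝ) (hv : v ⬝ᵥ v = 1) (lam : ℝ) (hlam : 0 ≤ lam)
    (heig : (S - T) *ᵥ v = lam • v) : lam ^ 2 ≤ ‖S * S - T * T‖ := by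
  have hs : 0 ≤ v ⬝ᵥ (S *ᵥ v) := by simpa using hS.dotProduct_mulVec_nonneg v
  have ht : 0 ≤ v ⬝ᵥ (T *ᵥ v) := by simpa using hT.dotProduct_mulVec_nonneg v
  have hherm : (S - T)ᵀ = S - T := by
    have := (hS.1.sub hT.1)
    rwa [Matrix.IsHermitian, conjTranspose_eq_transpose_of_trivial] at this
  have hdecomp : S * S - T * T = S * (S - T) + (S - T) * T := by noncomm_ring
  have hkey : v ⬝ᵥ ((S * S - T * T) *ᵥ v)
      = lam * (v ⬝ᵥ (S *ᵥ v)) + lam * (v ⬝ᵥ (T *ᵥ v)) := by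
    rw [hdecomp, add_mulVec, dotProduct_add]
    congr 1
    · rw [← mulVec_mulVec, heig, mulVec_smul, dotProduct_smul, smul_eq_mul]
    · rw [dotProduct_mulVec v, ← mulVec_transpose, transpose_mul, hherm, ← mulVec_mulVec, heig, mulVec_smul, smul_dotProduct,
        smul_eq_mul, mulVec_transpose, ← dotProduct_mulVec]
  have hst : v ⬝ᵥ ((S - T) *ᵥ v) = lam := by
    rw [heig, dotProduct_smul, smul_eq_mul, hv, mul_one]
  have h2 : v ⬝ᵥ ((S * S - T * T) *ᵥ v) ≤ ‖S * S - T * T‖ := aux_dot _ v hv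
  have h3 : v ⬝ᵥ ((S - T) *ᵥ v) = v ⬝ᵥ (S *ᵥ v) - v ⬝ᵥ (T *ᵥ v) := by
    rw [sub_mulVec, dotProduct_sub]
  nlinarith [mul_nonneg hlam ht, mul_nonneg hlam hs]

lemma aux_norm_le {q : ℕ} (M : Matrix (Fin q) (Fin q) ℝ) (hM : M.IsHermitian) (c : ℝ)
    (hc0 : 0 ≤ c) (hc : ∀ j, |hM.eigenvalues j| ≤ c) : ‖M‖ ≤ c := by
  have hherm : Mᵀ = M := by
    have := hM
    rwa [Matrix.IsHermitian, conjTranspose_eq_transpose_of_trivial] at this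
  rw [l2_opNorm_def]
  refine ContinuousLinearMap.opNorm_le_bound _ hc0 fun x => ?_
  set b := hM.eigenvectorBasis with hb
  set g := (toEuclideanLin.trans LinearMap.toContinuousLinearMap) M with hg
  have hrepr : ∀ j, b.repr (g x) j = hM.eigenvalues j * b.repr x j := by
    intro j
    rw [OrthonormalBasis.repr_apply_apply, OrthonormalBasis.repr_apply_apply]
    have hgx : (g x : Fin q → ℝ) = M *ᵥ (x : Fin q → ℝ) := rfl
    rw [PiLp.inner_apply, PiLp.inner_apply]
    simp only [RCLike.inner_apply, starRingEnd_apply, star_trivial]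
    rw [Finset.sum_congr rfl fun i _ => mul_comm ((g x) i) (b j i), Finset.sum_congr rfl fun i _ => mul_comm (x i) (b j i)]
    calc ∑ i, b j i * (g x) i = ⇑(b j) ⬝ᵥ (M *ᵥ (x : Fin q → ℝ)) := by rw [← hgx]; rfl
      _ = (⇑(b j) ᵥ* M) ⬝ᵥ (x : Fin q → ℝ) := dotProduct_mulVec _ _ _
      _ = (M *ᵥ ⇑(b j)) ⬝ᵥ (x : Fin q → ℝ) := by rw [← mulVec_transpose, hherm]
      _ = (hM.eigenvalues j • ⇑(b j)) ⬝ᵥ (x : Fin q → ℝ) := by rw [hM.mulVec_eigenvectorBasis]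
      _ = hM.eigenvalues j * ∑ i, b j i * x i := by rw [smul_dotProduct, smul_eq_mul]; rfl
  calc ‖g x‖ = ‖b.repr (g x)‖ := (b.repr.norm_map _).symm
    _ ≤ c * ‖b.repr x‖ := by
        rw [EuclideanSpace.norm_eq, EuclideanSpace.norm_eq]
        have hcs : c * Real.sqrt (∑ i, ‖b.repr x i‖ ^ 2)
            = Real.sqrt (∑ i, c ^ 2 * ‖b.repr x i‖ ^ 2) := by
          rw [← Finset.mul_sum, Real.sqrt_mul (sq_nonneg c), Real.sqrt_sq hc0]
        rw [hcs]
        apply Real.sqrt_le_sqrt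
        apply Finset.sum_le_sum
        intro j _
        rw [hrepr j]
        have h1 : |hM.eigenvalues j| ^ 2 ≤ c ^ 2 := pow_le_pow_left₀ (abs_nonneg _) (hc j) 2
        rw [Real.norm_eq_abs, Real.norm_eq_abs, abs_mul, mul_pow]
        exact mul_le_mul_of_nonneg_right h1 (by positivity)
    _ = c * ‖x‖ := by rw [b.repr.norm_map]



lemma aux_sq {q : ℕ} (S T : Matrix (Fin q) (Fin q) ℝ) (hS : S.PosSemidef) (hT : T.PosSemidef) :
    ‖S - T‖ ^ 2 ≤ ‖S * S - T * T‖ := by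
  rcases Nat.eq_zero_or_pos q with rfl | hq
  · have h0 : S - T = 0 := by ext i j; exact i.elim0
    rw [h0, norm_zero]
    simpa using norm_nonneg (S * S - T * T)
  · have : Nonempty (Fin q) := ⟨⟨0, hq⟩⟩
    have hM : (S - T).IsHermitian := hS.1.sub hT.1
    obtain ⟨i, hi⟩ := Finite.exists_max fun j => |hM.eigenvalues j|
    set lam := hM.eigenvalues i with hlam
    set v : Fin q → ℝ := ⇑(hM.eigenvectorBasis i) with hv
    have hvv : v ⬝ᵥ v = 1 := by
      have h1 : (inner ℝ (hM.eigenvectorBasis i) (hM.eigenvectorBasis i) : ℝ) = 1 := by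
        rw [real_inner_self_eq_norm_sq, hM.eigenvectorBasis.orthonormal.1 i]
        norm_num
      rw [PiLp.inner_apply] at h1
      simpa [dotProduct, v, sq] using h1
    have heig : (S - T) *ᵥ v = lam • v := hM.mulVec_eigenvectorBasis i
    have hnorm : ‖S - T‖ ≤ |lam| := aux_norm_le _ hM _ (abs_nonneg _) hi
    have hsq : ‖S - T‖ ^ 2 ≤ lam ^ 2 := by
      rw [← sq_abs lam]
      exact pow_le_pow_left₀ (norm_nonneg _) hnorm 2
    rcases le_or_gt 0 lam with h | h
    · exact hsq.trans (aux_eig S T hS hT v hvv lam h heig)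
    · have heig' : (T - S) *ᵥ v = (-lam) • v := by
        rw [← neg_sub S T, neg_mulVec, heig, neg_smul]
      have h2 := aux_eig T S hT hS v hvv (-lam) (by linarith) heig'
      rw [neg_sq, norm_sub_rev (T*T)] at h2
      exact hsq.trans h2

/-- Let `A` and `B` be real `q × m` matrices and `ε ≥ 0` with `‖A − B‖ ≤ ε` (spectral norm).
Then `AAᵀ` and `BBᵀ` are positive semidefinite, and their (unique) positive semidefinite
square roots `S` and `T` satisfy `‖S − T‖ ≤ (ε(ε + 2‖B‖))^{1/2}`. -/
theorem stmt1 (q m : ℕ) (A B : Matrix (Fin q) (Fin m) ℝ) (ε : ℝ) (hε : 0 ≤ ε)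
    (h : ‖A - B‖ ≤ ε) :
    (A * Aᵀ).PosSemidef ∧ (B * Bᵀ).PosSemidef ∧
      ∀ S T : Matrix (Fin q) (Fin q) ℝ, S.PosSemidef → S * S = A * Aᵀ →
        T.PosSemidef → T * T = B * Bᵀ →
          ‖S - T‖ ≤ Real.sqrt (ε * (ε + 2 * ‖B‖)) := by
  refine ⟨?_, ?_, ?_⟩
  · simpa [conjTranspose_eq_transpose_of_trivial] using posSemidef_self_mul_conjTranspose A
  · simpa [conjTranspose_eq_transpose_of_trivial] using posSemidef_self_mul_conjTranspose B
  · intro S T hS hSsq hT hTsq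
    have hAn : ‖A‖ ≤ ε + ‖B‖ := by
      have := norm_sub_norm_le A B
      linarith
    have hAt : ‖Aᵀ‖ = ‖A‖ := by
      rw [← conjTranspose_eq_transpose_of_trivial]
      exact l2_opNorm_conjTranspose A
    have hABt : ‖(A - B)ᵀ‖ = ‖A - B‖ := by
      rw [← conjTranspose_eq_transpose_of_trivial]
      exact l2_opNorm_conjTranspose _
    have hdecomp : A * Aᵀ - B * Bᵀ = (A - B) * Aᵀ + B * (A - B)ᵀ := by
      rw [transpose_sub, Matrix.sub_mul, Matrix.mul_sub]
      abel
    have hbound : ‖A * Aᵀ - B * Bᵀ‖ ≤ ε * (ε + 2 * ‖B‖) := by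
      rw [hdecomp]
      calc ‖(A - B) * Aᵀ + B * (A - B)ᵀ‖
          ≤ ‖(A - B) * Aᵀ‖ + ‖B * (A - B)ᵀ‖ := norm_add_le _ _
        _ ≤ ‖A - B‖ * ‖Aᵀ‖ + ‖B‖ * ‖(A - B)ᵀ‖ :=
            add_le_add (l2_opNorm_mul _ _) (l2_opNorm_mul _ _)
        _ ≤ ε * (ε + ‖B‖) + ‖B‖ * ε := by
            rw [hAt, hABt]
            have hB : (0:ℝ) ≤ ‖B‖ := norm_nonneg _
            have h1 : ‖A - B‖ * ‖A‖ ≤ ε * (ε + ‖B‖) :=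
              mul_le_mul h hAn (norm_nonneg _) hε
            have h2 : ‖B‖ * ‖A - B‖ ≤ ‖B‖ * ε := mul_le_mul_of_nonneg_left h hB
            linarith
        _ = ε * (ε + 2 * ‖B‖) := by ring
    have hkey : ‖S - T‖ ^ 2 ≤ ε * (ε + 2 * ‖B‖) := by
      calc ‖S - T‖ ^ 2 ≤ ‖S * S - T * T‖ := aux_sq S T hS hT
        _ = ‖A * Aᵀ - B * Bᵀ‖ := by rw [hSsq, hTsq]
        _ ≤ ε * (ε + 2 * ‖B‖) := hbound
    calc ‖S - T‖ = Real.sqrt (‖S - T‖ ^ 2) := (Real.sqrt_sq (norm_nonneg _)).symm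
      _ ≤ Real.sqrt (ε * (ε + 2 * ‖B‖)) := Real.sqrt_le_sqrt hkey
end

section
/- Let J be a nonzero real q×m matrix, c ∈ ℝ^q, and ω ∈ (0, ∞). Then there exists α ∈ [0, ω] such that ‖c − α J Jᵀ c‖² ≤ ‖c‖² − ‖Jᵀc‖² · min{1/‖JᵀJ‖, ω}. -/
open Matrix
open scoped Matrix.Norms.L2Operator

/-- Reinterpret a function `Fin q → ℝ` as a vector in Euclidean space (identity map). -/
def toEuc {q : ℕ} (v : Fin q → ℝ) : EuclideanSpace ℝ (Fin q) := WithLp.toLp 2 v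

lemma toEuc_eq {q : ℕ} (v : Fin q → ℝ) :
    toEuc v = (EuclideanSpace.equiv (Fin q) ℝ).symm v := rfl

lemma inner_toEuc {q : ℕ} (v w : Fin q → ℝ) :
    (inner ℝ (toEuc v) (toEuc w) : ℝ) = v ⬝ᵥ w := by
  simp [toEuc, PiLp.inner_apply, dotProduct, mul_comm]

/-- Let `J` be a nonzero real `q × m` matrix, `c ∈ ℝ^q`, and `ω ∈ (0, ∞)`.  Then there
exists `α ∈ [0, ω]` with `‖c − α J Jᵀ c‖² ≤ ‖c‖² − ‖Jᵀc‖² min{1/‖JᵀJ‖, ω}`. -/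
theorem stmt4 (q m : ℕ) (J : Matrix (Fin q) (Fin m) ℝ) (hJ : J ≠ 0)
    (c : EuclideanSpace ℝ (Fin q)) (ω : ℝ) (hω : 0 < ω) :
    ∃ α ∈ Set.Icc (0 : ℝ) ω,
      ‖c - α • toEuc (J.mulVec (Jᵀ.mulVec c))‖ ^ 2 ≤
        ‖c‖ ^ 2 - ‖toEuc (Jᵀ.mulVec c)‖ ^ 2 * min (1 / ‖Jᵀ * J‖) ω := by
  set w : EuclideanSpace ℝ (Fin m) := toEuc (Jᵀ.mulVec c) with hw
  set u : EuclideanSpace ℝ (Fin q) := toEuc (J.mulVec (Jᵀ.mulVec c)) with hu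
  set N : ℝ := ‖Jᵀ * J‖ with hN
  -- N > 0
  have hN' : N = ‖J‖ * ‖J‖ := by
    rw [hN, ← Matrix.conjTranspose_eq_transpose_of_trivial,
      Matrix.l2_opNorm_conjTranspose_mul_self]
  have hNpos : 0 < N := by
    rw [hN']
    have : (0:ℝ) < ‖J‖ := norm_pos_iff.mpr hJ
    exact mul_pos this this
  set α : ℝ := min (1 / N) ω with hα
  have hα0 : 0 ≤ α := le_min (by positivity) hω.le
  have hαω : α ≤ ω := min_le_right _ _
  have hαN : α * N ≤ 1 := by
    calc α * N ≤ (1 / N) * N := by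
          apply mul_le_mul_of_nonneg_right (min_le_left _ _) hNpos.le
      _ = 1 := by field_simp
  refine ⟨α, ⟨hα0, hαω⟩, ?_⟩
  -- inner c u = ‖w‖²
  have hcu : (inner ℝ c u : ℝ) = ‖w‖ ^ 2 := by
    have h1 : (inner ℝ c u : ℝ) = (c : Fin q → ℝ) ⬝ᵥ (J *ᵥ (Jᵀ *ᵥ (c : Fin q → ℝ))) :=
      inner_toEuc _ _
    have h2 : ‖w‖ ^ 2 = (Jᵀ *ᵥ (c : Fin q → ℝ)) ⬝ᵥ (Jᵀ *ᵥ (c : Fin q → ℝ)) := by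
      rw [← real_inner_self_eq_norm_sq]
      exact inner_toEuc _ _
    rw [h1, h2, dotProduct_mulVec, ← Matrix.mulVec_transpose]
  -- ‖u‖² ≤ N * ‖w‖²
  have huw : ‖u‖ ^ 2 ≤ N * ‖w‖ ^ 2 := by
    have h1 : ‖u‖ ^ 2 = (inner ℝ (toEuc ((Jᵀ * J) *ᵥ (Jᵀ *ᵥ (c : Fin q → ℝ)))) w : ℝ) := by
      rw [← real_inner_self_eq_norm_sq, hu, hw, inner_toEuc, inner_toEuc,
        dotProduct_mulVec, ← Matrix.mulVec_transpose, Matrix.mulVec_mulVec]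
    rw [h1]
    calc (inner ℝ (toEuc ((Jᵀ * J) *ᵥ (Jᵀ *ᵥ (c : Fin q → ℝ)))) w : ℝ)
        ≤ ‖toEuc ((Jᵀ * J) *ᵥ (Jᵀ *ᵥ (c : Fin q → ℝ)))‖ * ‖w‖ := real_inner_le_norm _ _
      _ ≤ (N * ‖w‖) * ‖w‖ := by
          apply mul_le_mul_of_nonneg_right _ (norm_nonneg _)
          rw [toEuc_eq]
          exact Matrix.l2_opNorm_mulVec (Jᵀ * J) w
      _ = N * ‖w‖ ^ 2 := by ring
  -- expand the square
  have hexp : ‖c - α • u‖ ^ 2 = ‖c‖ ^ 2 - 2 * α * ‖w‖ ^ 2 + α ^ 2 * ‖u‖ ^ 2 := by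
    rw [norm_sub_sq_real, inner_smul_right, hcu, norm_smul]
    simp [mul_pow, abs_of_nonneg hα0]
    ring
  have hkey : α ^ 2 * ‖u‖ ^ 2 ≤ α * ‖w‖ ^ 2 := by
    calc α ^ 2 * ‖u‖ ^ 2 ≤ α ^ 2 * (N * ‖w‖ ^ 2) := by
          apply mul_le_mul_of_nonneg_left huw (by positivity)
      _ = (α * N) * (α * ‖w‖ ^ 2) := by ring
      _ ≤ 1 * (α * ‖w‖ ^ 2) := by
          apply mul_le_mul_of_nonneg_right hαN (by positivity)
      _ = α * ‖w‖ ^ 2 := one_mul _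
  rw [hexp]
  have : ‖w‖ ^ 2 * min (1 / N) ω = α * ‖w‖ ^ 2 := by rw [← hα]; ring
  rw [this]
  nlinarith [hkey]
end

section
/- Let J be a nonzero real q×m matrix, c ∈ ℝ^q, ω ∈ (0, ∞), and δ_v ∈ (0, 1]. Suppose α̂ ∈ [0, ω] is a minimizer of the function α ↦ ‖c − α J Jᵀ c‖ over the interval [0, ω], and suppose v ∈ ℝ^m satisfies the Cauchy decrease condition ‖c‖ − ‖c + Jv‖ ≥ δ_v (‖c‖ − ‖c − α̂ J Jᵀ c‖). Then ‖c‖ (‖c‖ − ‖c + Jv‖) ≥ (1/2) δ_v min{1/‖JᵀJ‖, ω} ‖Jᵀc‖². -/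
set_option maxHeartbeats 1000000

open Matrix
open scoped Matrix.Norms.L2Operator

/-- Let `J ≠ 0` be a real `q × m` matrix, `c ∈ ℝ^q`, `ω > 0`, `δ_v ∈ (0,1]`.  If
`α̂ ∈ [0, ω]` minimizes `α ↦ ‖c − α J Jᵀ c‖` over `[0, ω]` and `v` satisfies the Cauchy
decrease condition `‖c‖ − ‖c + Jv‖ ≥ δ_v (‖c‖ − ‖c − α̂ J Jᵀ c‖)`, then
`‖c‖ (‖c‖ − ‖c + Jv‖) ≥ (1/2) δ_v min{1/‖JᵀJ‖, ω} ‖Jᵀc‖²`. -/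
theorem stmt5 (q m : ℕ) (J : Matrix (Fin q) (Fin m) ℝ) (hJ : J ≠ 0)
    (c : EuclideanSpace ℝ (Fin q)) (ω δv αhat : ℝ) (hω : 0 < ω)
    (hδv0 : 0 < δv) (hδv1 : δv ≤ 1)
    (hαhat : αhat ∈ Set.Icc (0 : ℝ) ω)
    (hmin : ∀ α ∈ Set.Icc (0 : ℝ) ω,
      ‖c - αhat • toEuc (J.mulVec (Jᵀ.mulVec c))‖ ≤ ‖c - α • toEuc (J.mulVec (Jᵀ.mulVec c))‖)
    (v : EuclideanSpace ℝ (Fin m))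
    (hcauchy : ‖c‖ - ‖c + toEuc (J.mulVec v)‖ ≥
      δv * (‖c‖ - ‖c - αhat • toEuc (J.mulVec (Jᵀ.mulVec c))‖)) :
    ‖c‖ * (‖c‖ - ‖c + toEuc (J.mulVec v)‖) ≥
      (1 / 2) * δv * min (1 / ‖Jᵀ * J‖) ω * ‖toEuc (Jᵀ.mulVec c)‖ ^ 2 := by
  set g : EuclideanSpace ℝ (Fin m) := toEuc (Jᵀ.mulVec c) with hg
  set u : EuclideanSpace ℝ (Fin q) := toEuc (J.mulVec (Jᵀ.mulVec c)) with hu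
  have hN0 : (0:ℝ) < ‖Jᵀ * J‖ := by
    rw [norm_pos_iff]
    intro h
    apply hJ
    rw [← Matrix.conjTranspose_mul_self_eq_zero (A := J)]
    simpa [Matrix.conjTranspose_eq_transpose_of_trivial] using h
  set N := ‖Jᵀ * J‖ with hNdef
  set αs := min (1 / N) ω with hαs
  have hαs0 : 0 < αs := lt_min (by positivity) hω
  have hαsN : αs * N ≤ 1 := by
    have : αs ≤ 1 / N := min_le_left _ _
    rw [div_eq_inv_mul] at this
    calc αs * N ≤ (N⁻¹ * 1) * N := by nlinarith
    _ = 1 := by field_simp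
  -- inner product fact: ⟪c, u⟫ = ‖g‖²
  have hinner : inner ℝ c u = (‖g‖:ℝ) ^ 2 := by
    have h1 : (inner ℝ c u : ℝ) = c ⬝ᵥ (J.mulVec (Jᵀ.mulVec c)) := by
      simp [PiLp.inner_apply, RCLike.inner_apply, dotProduct, toEuc, hu, mul_comm]
    have h2 : (‖g‖:ℝ)^2 = (Jᵀ.mulVec c) ⬝ᵥ (Jᵀ.mulVec c) := by
      rw [← real_inner_self_eq_norm_sq]
      simp only [PiLp.inner_apply, RCLike.inner_apply, conj_trivial, dotProduct, toEuc, hg]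
    rw [h1, h2, Matrix.dotProduct_mulVec, ← Matrix.mulVec_transpose]
  -- norm bound: ‖u‖² ≤ N * ‖g‖²
  have hub : (‖u‖:ℝ)^2 ≤ N * ‖g‖^2 := by
    have h1 : (‖u‖:ℝ)^2 = inner ℝ g (toEuc ((Jᵀ * J).mulVec (Jᵀ.mulVec c))) := by
      rw [← real_inner_self_eq_norm_sq]
      simp only [PiLp.inner_apply, RCLike.inner_apply, conj_trivial]
      have : ∀ i, (u i) * (u i) = (J.mulVec (Jᵀ.mulVec c) i) * (J.mulVec (Jᵀ.mulVec c) i) := fun i => rfl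
      calc (∑ i, u i * u i) = (J.mulVec (Jᵀ.mulVec c)) ⬝ᵥ (J.mulVec (Jᵀ.mulVec c)) := rfl
      _ = (Jᵀ.mulVec c) ⬝ᵥ ((Jᵀ * J).mulVec (Jᵀ.mulVec c)) := by
          rw [Matrix.dotProduct_mulVec, ← Matrix.mulVec_transpose, Matrix.mulVec_mulVec, dotProduct_comm]
      _ = ∑ i, g i * (toEuc ((Jᵀ * J).mulVec (Jᵀ.mulVec c)) i) := rfl
      _ = ∑ i, (toEuc ((Jᵀ * J).mulVec (Jᵀ.mulVec c)) i) * g i := Finset.sum_congr rfl fun i _ => mul_comm _ _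
    have h2 : (inner ℝ g (toEuc ((Jᵀ * J).mulVec (Jᵀ.mulVec c))) : ℝ) ≤ ‖g‖ * ‖toEuc ((Jᵀ * J).mulVec (Jᵀ.mulVec c))‖ :=
      real_inner_le_norm _ _
    have h3 : ‖toEuc ((Jᵀ * J).mulVec (Jᵀ.mulVec c))‖ ≤ N * ‖g‖ := by
      have := (Jᵀ * J).l2_opNorm_mulVec g
      simpa [toEuc, hg] using this
    have hgnn : (0:ℝ) ≤ ‖g‖ := norm_nonneg _
    nlinarith [norm_nonneg (toEuc ((Jᵀ * J).mulVec (Jᵀ.mulVec c)))]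
  -- expansion of ‖c - α•u‖²
  have hexp : ∀ α : ℝ, ‖c - α • u‖^2 = ‖c‖^2 - 2 * α * ‖g‖^2 + α^2 * ‖u‖^2 := by
    intro α
    rw [norm_sub_sq_real, inner_smul_right, hinner, norm_smul]
    simp [mul_pow]
    ring
  -- key bound at αs
  have hkey : ‖c‖^2 - ‖c - αs • u‖^2 ≥ αs * ‖g‖^2 := by
    rw [hexp]
    have h1 : αs^2 * ‖u‖^2 ≤ αs^2 * (N * ‖g‖^2) := by nlinarith
    nlinarith [mul_nonneg (mul_nonneg (sub_nonneg.2 hαsN) hαs0.le) (sq_nonneg ‖g‖)]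
  have hαsIcc : αs ∈ Set.Icc (0:ℝ) ω := ⟨le_of_lt hαs0, min_le_right _ _⟩
  have hY1 : ‖c - αhat • u‖ ≤ ‖c - αs • u‖ := hmin αs hαsIcc
  have hY2 : ‖c - αhat • u‖ ≤ ‖c‖ := by
    have := hmin 0 ⟨le_refl 0, le_of_lt hω⟩
    simpa using this
  have hkey2 : ‖c‖^2 - ‖c - αhat • u‖^2 ≥ αs * ‖g‖^2 := by
    have h1 : ‖c - αhat • u‖^2 ≤ ‖c - αs • u‖^2 := by
      have := norm_nonneg (c - αhat • u); nlinarith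
    linarith [hkey]
  have hcn : (0:ℝ) ≤ ‖c‖ := norm_nonneg _
  have hYn : (0:ℝ) ≤ ‖c - αhat • u‖ := norm_nonneg _
  have hfinal : ‖c‖ * (‖c‖ - ‖c - αhat • u‖) ≥ (1/2) * αs * ‖g‖^2 := by
    nlinarith
  have hstep : ‖c‖ * (‖c‖ - ‖c + toEuc (J.mulVec v)‖) ≥ ‖c‖ * (δv * (‖c‖ - ‖c - αhat • u‖)) :=
    mul_le_mul_of_nonneg_left hcauchy hcn
  calc ‖c‖ * (‖c‖ - ‖c + toEuc (J.mulVec v)‖) ≥ ‖c‖ * (δv * (‖c‖ - ‖c - αhat • u‖)) := hstep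
  _ = δv * (‖c‖ * (‖c‖ - ‖c - αhat • u‖)) := by ring
  _ ≥ δv * ((1/2) * αs * ‖g‖^2) := by nlinarith
  _ = (1 / 2) * δv * αs * ‖g‖^2 := by ring
end

section
/- Let J be a real q×m matrix with rank q, and let W be a real m×m symmetric matrix such that, for some σ > 0, uᵀ W u ≥ σ ‖u‖² for every u ∈ ℝ^m with J u = 0. Then there exists λ ≥ 0 such that the matrix W + λ Jᵀ J is symmetric positive definite. -/
open Matrix
open scoped Matrix.Norms.L2Operator

/-- Let `J` be a real `q × m` matrix of rank `q` and `W` a real symmetric `m × m` matrix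
such that for some `σ > 0` one has `uᵀ W u ≥ σ ‖u‖²` for every `u` with `J u = 0`.
Then there exists `λ ≥ 0` such that `W + λ Jᵀ J` is symmetric positive definite. -/
theorem stmt8 (q m : ℕ) (J : Matrix (Fin q) (Fin m) ℝ) (hrank : J.rank = q)
    (W : Matrix (Fin m) (Fin m) ℝ) (hW : W.IsSymm) (σ : ℝ) (hσ : 0 < σ)
    (hcoerc : ∀ u : Fin m → ℝ, J.mulVec u = 0 → σ * ‖toEuc u‖ ^ 2 ≤ u ⬝ᵥ W.mulVec u) :
    ∃ lam : ℝ, 0 ≤ lam ∧ (W + lam • (Jᵀ * J)).PosDef := by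
  classical
  set f : (Fin m → ℝ) → ℝ := fun u => u ⬝ᵥ W.mulVec u with hf_def
  set g : (Fin m → ℝ) → ℝ := fun u => u ⬝ᵥ (Jᵀ * J).mulVec u with hg_def
  have hg_eq : ∀ u, g u = (J.mulVec u) ⬝ᵥ (J.mulVec u) := fun u => by
    simp only [hg_def, ← mulVec_mulVec, dotProduct_mulVec, vecMul_transpose]
  have hg_nonneg : ∀ u, 0 ≤ g u := fun u => by
    rw [hg_eq]; exact Finset.sum_nonneg fun i _ => mul_self_nonneg _
  have hnorm_sq : ∀ u : Fin m → ℝ, ‖toEuc u‖ ^ 2 = u ⬝ᵥ u := fun u => by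
    rw [EuclideanSpace.norm_eq, Real.sq_sqrt (by positivity)]
    simp only [Real.norm_eq_abs, sq_abs]
    exact Finset.sum_congr rfl fun i _ => pow_two (u i)
  -- continuity of a quadratic form on Euclidean space
  have hcont : ∀ M : Matrix (Fin m) (Fin m) ℝ,
      Continuous (fun u : EuclideanSpace ℝ (Fin m) => (u : Fin m → ℝ) ⬝ᵥ M.mulVec u) := by
    intro M
    unfold dotProduct mulVec
    simp only
    apply continuous_finset_sum
    intro i _
    refine ((continuous_apply i).comp (PiLp.continuous_ofLp 2 _)).mul ?_
    exact continuous_finset_sum _ fun j _ =>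
      continuous_const.mul ((continuous_apply j).comp (PiLp.continuous_ofLp 2 _))
  -- key: on the kernel-sphere f is positive
  have hfpos_ker : ∀ u : Fin m → ℝ, ‖toEuc u‖ = 1 → g u = 0 → σ ≤ f u := by
    intro u hu hgu
    have hJ : J.mulVec u = 0 := by
      have := (hg_eq u) ▸ hgu
      exact dotProduct_self_eq_zero.mp this.symm.symm
    have := hcoerc u hJ
    rwa [hu, one_pow, mul_one] at this
  -- the compact "bad" set
  set T : Set (EuclideanSpace ℝ (Fin m)) :=
    {u | ‖u‖ = 1 ∧ f u ≤ 0} with hT_def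
  have hT_compact : IsCompact T := by
    have h1 : T = Metric.sphere (0 : EuclideanSpace ℝ (Fin m)) 1 ∩
        (fun u : EuclideanSpace ℝ (Fin m) => f u) ⁻¹' Set.Iic 0 := by
      ext u
      simp [hT_def, Metric.mem_sphere, dist_zero_right]
    rw [h1]
    exact (isCompact_sphere 0 1).inter_right (isClosed_Iic.preimage (hcont W))
  -- choose lam
  obtain ⟨lam, hlam0, hlam⟩ :
      ∃ lam : ℝ, 0 ≤ lam ∧ ∀ u : Fin m → ℝ, ‖toEuc u‖ = 1 → 0 < f u + lam * g u := by
    rcases Set.eq_empty_or_nonempty T with hTe | hTne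
    · refine ⟨0, le_refl _, fun u hu => ?_⟩
      have : (toEuc u) ∉ T := hTe ▸ Set.notMem_empty _
      simp only [hT_def, Set.mem_setOf_eq, not_and, not_le] at this
      have h2 : 0 < f u := this hu
      linarith
    · obtain ⟨u₀, hu₀T, hu₀min⟩ := hT_compact.exists_isMinOn hTne ((hcont (Jᵀ * J)).continuousOn)
      obtain ⟨u₁, hu₁T, hu₁min⟩ := hT_compact.exists_isMinOn hTne ((hcont W).continuousOn)
      set c : ℝ := g u₀ with hc_def
      have hc_pos : 0 < c := by
        rcases lt_or_eq_of_le (hg_nonneg u₀) with h | h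
        · exact h
        · exfalso
          have := hfpos_ker u₀ hu₀T.1 h.symm
          linarith [hu₀T.2]
      set Mv : ℝ := f u₁ with hM_def
      have hMle : Mv ≤ 0 := hu₁T.2
      refine ⟨(1 - Mv) / c, div_nonneg (by linarith) hc_pos.le, fun u hu => ?_⟩
      by_cases hfu : f u ≤ 0
      · have huT : (toEuc u) ∈ T := ⟨hu, hfu⟩
        have h1 : Mv ≤ f u := hu₁min huT
        have h2 : c ≤ g u := hu₀min huT
        have h3 : (1 - Mv) / c * c ≤ (1 - Mv) / c * g u :=
          mul_le_mul_of_nonneg_left h2 (div_nonneg (by linarith) hc_pos.le)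
        rw [div_mul_cancel₀ _ (ne_of_gt hc_pos)] at h3
        linarith
      · push_neg at hfu
        nlinarith [hg_nonneg u, hc_pos, div_nonneg (by linarith : (0:ℝ) ≤ 1 - Mv) hc_pos.le]
  refine ⟨lam, hlam0, posDef_iff_dotProduct_mulVec.mpr ⟨?_, ?_⟩⟩
  · rw [Matrix.IsHermitian, conjTranspose_eq_transpose_of_trivial, transpose_add, hW,
      transpose_smul, transpose_mul, transpose_transpose]
  · intro x hx
    have hxn : (0:ℝ) < ‖toEuc x‖ := by
      rw [norm_pos_iff]
      exact fun h => hx (congrArg (fun v : EuclideanSpace ℝ (Fin m) => (v : Fin m → ℝ)) h)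
    set t : ℝ := ‖toEuc x‖ with ht_def
    set v : Fin m → ℝ := t⁻¹ • x with hv_def
    have hvn : ‖toEuc v‖ = 1 := by
      have : toEuc v = t⁻¹ • toEuc x := rfl
      rw [this, norm_smul, norm_inv, Real.norm_eq_abs, abs_of_pos hxn, inv_mul_cancel₀ hxn.ne']
    have hscale : ∀ M : Matrix (Fin m) (Fin m) ℝ,
        v ⬝ᵥ M.mulVec v = t⁻¹ ^ 2 * (x ⬝ᵥ M.mulVec x) := fun M => by
      rw [hv_def, mulVec_smul, dotProduct_smul, smul_dotProduct, smul_eq_mul, smul_eq_mul]; ring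
    have key := hlam v hvn
    have hfv : f v = t⁻¹ ^ 2 * f x := hscale W
    have hgv : g v = t⁻¹ ^ 2 * g x := hscale (Jᵀ * J)
    have hpos : 0 < t⁻¹ ^ 2 * (f x + lam * g x) := by
      rw [hfv, hgv] at key; ring_nf at key ⊢; linarith
    have hfx : 0 < f x + lam * g x := by
      have h2 : (0:ℝ) < t⁻¹ ^ 2 := by positivity
      nlinarith
    have : star x ⬝ᵥ (W + lam • (Jᵀ * J)).mulVec x = f x + lam * g x := by
      simp only [star_trivial, add_mulVec, dotProduct_add, smul_mulVec,
        dotProduct_smul, smul_eq_mul, hf_def, hg_def]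
    rw [this]
    exact hfx
end

section
/- Let τ > 0, let g, ḡ, d, d̄ ∈ ℝ^m, c, c̄ ∈ ℝ^q, and let J and J̄ be real q×m matrices. Suppose ‖g − ḡ‖ ≤ ε_g, ‖c − c̄‖ ≤ ε_c, ‖J − J̄‖ ≤ ε_J, and ‖d − d̄‖ ≤ ε_d for nonnegative constants ε_g, ε_c, ε_J, ε_d. Then |Δm(d, τ; g, c, J) − Δm(d, τ; ḡ, c̄, J̄)| ≤ τ ε_g ε_d + 2 ε_c + ε_J ε_d + (τ ε_g + ε_J) ‖d̄‖. -/
open Matrix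
open scoped Matrix.Norms.L2Operator

/-- The merit-function model reduction
`Δm(d, τ; g, c, J) := −τ gᵀd + ‖c‖ − ‖c + J d‖` (Euclidean norms). -/
noncomputable def deltaM {q m : ℕ} (d : EuclideanSpace ℝ (Fin m)) (τ : ℝ)
    (g : EuclideanSpace ℝ (Fin m)) (c : EuclideanSpace ℝ (Fin q))
    (J : Matrix (Fin q) (Fin m) ℝ) : ℝ :=
  -(τ * (g ⬝ᵥ d)) + ‖c‖ - ‖c + toEuc (J.mulVec d)‖

lemma dot_le {m : ℕ} (x y : EuclideanSpace ℝ (Fin m)) :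
    |dotProduct (x : Fin m → ℝ) (y : Fin m → ℝ)| ≤ ‖x‖ * ‖y‖ := by
  have h : (inner ℝ x y : ℝ) = dotProduct (x : Fin m → ℝ) (y : Fin m → ℝ) := by
    rw [EuclideanSpace.inner_eq_star_dotProduct, star_trivial, dotProduct_comm]
  rw [← h]
  exact abs_real_inner_le_norm x y

lemma mulVec_le {q m : ℕ} (A : Matrix (Fin q) (Fin m) ℝ) (x : EuclideanSpace ℝ (Fin m)) :
    ‖toEuc (A.mulVec x)‖ ≤ ‖A‖ * ‖x‖ :=
  A.l2_opNorm_mulVec x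

/-- If `‖g − ḡ‖ ≤ ε_g`, `‖c − c̄‖ ≤ ε_c`, `‖J − J̄‖ ≤ ε_J`, and `‖d − d̄‖ ≤ ε_d`, then
`|Δm(d, τ; g, c, J) − Δm(d, τ; ḡ, c̄, J̄)| ≤ τ ε_g ε_d + 2 ε_c + ε_J ε_d + (τ ε_g + ε_J) ‖d̄‖`. -/
theorem stmt11 (q m : ℕ) (τ : ℝ) (hτ : 0 < τ)
    (g gbar d dbar : EuclideanSpace ℝ (Fin m)) (c cbar : EuclideanSpace ℝ (Fin q))
    (J Jbar : Matrix (Fin q) (Fin m) ℝ)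
    (εg εc εJ εd : ℝ) (hεg : 0 ≤ εg) (hεc : 0 ≤ εc) (hεJ : 0 ≤ εJ) (hεd : 0 ≤ εd)
    (hg : ‖g - gbar‖ ≤ εg) (hc : ‖c - cbar‖ ≤ εc) (hJ : ‖J - Jbar‖ ≤ εJ)
    (hd : ‖d - dbar‖ ≤ εd) :
    |deltaM d τ g c J - deltaM d τ gbar cbar Jbar| ≤
      τ * εg * εd + 2 * εc + εJ * εd + (τ * εg + εJ) * ‖dbar‖ := by
  have hdn : ‖d‖ ≤ εd + ‖dbar‖ := by
    calc ‖d‖ = ‖(d - dbar) + dbar‖ := by rw [sub_add_cancel]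
      _ ≤ ‖d - dbar‖ + ‖dbar‖ := norm_add_le _ _
      _ ≤ εd + ‖dbar‖ := by linarith
  -- Term A
  have hA : |τ * ((g - gbar) ⬝ᵥ (d : Fin m → ℝ))| ≤ τ * εg * (εd + ‖dbar‖) := by
    rw [abs_mul, abs_of_pos hτ, mul_assoc]
    refine mul_le_mul_of_nonneg_left ?_ hτ.le
    calc |(g - gbar) ⬝ᵥ (d : Fin m → ℝ)| ≤ ‖g - gbar‖ * ‖d‖ := dot_le (g - gbar) d
      _ ≤ εg * (εd + ‖dbar‖) := by
          apply mul_le_mul hg hdn (norm_nonneg _)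
          exact hεg
  -- Term B
  have hB : |‖c‖ - ‖cbar‖| ≤ εc := le_trans (abs_norm_sub_norm_le c cbar) hc
  -- Term C
  have hC : |‖c + toEuc (J.mulVec d)‖ - ‖cbar + toEuc (Jbar.mulVec d)‖| ≤
      εc + εJ * (εd + ‖dbar‖) := by
    have h1 : (c + toEuc (J.mulVec d)) - (cbar + toEuc (Jbar.mulVec d))
        = (c - cbar) + toEuc ((J - Jbar).mulVec d) := by
      simp only [toEuc, Matrix.sub_mulVec, WithLp.toLp_sub]
      abel_nf
    calc |‖c + toEuc (J.mulVec d)‖ - ‖cbar + toEuc (Jbar.mulVec d)‖|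
        ≤ ‖(c + toEuc (J.mulVec d)) - (cbar + toEuc (Jbar.mulVec d))‖ :=
          abs_norm_sub_norm_le _ _
      _ = ‖(c - cbar) + toEuc ((J - Jbar).mulVec d)‖ := by rw [h1]
      _ ≤ ‖c - cbar‖ + ‖toEuc ((J - Jbar).mulVec d)‖ := norm_add_le _ _
      _ ≤ εc + εJ * (εd + ‖dbar‖) := by
          have := mulVec_le (J - Jbar) d
          have h2 : ‖J - Jbar‖ * ‖d‖ ≤ εJ * (εd + ‖dbar‖) :=
            mul_le_mul hJ hdn (norm_nonneg _) hεJ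
          linarith
  have key : deltaM d τ g c J - deltaM d τ gbar cbar Jbar
      = -(τ * ((g - gbar) ⬝ᵥ (d : Fin m → ℝ))) + (‖c‖ - ‖cbar‖)
        - (‖c + toEuc (J.mulVec d)‖ - ‖cbar + toEuc (Jbar.mulVec d)‖) := by
    have hsub : ((g - gbar : EuclideanSpace ℝ (Fin m)) : Fin m → ℝ) ⬝ᵥ (d : Fin m → ℝ)
        = (g : Fin m → ℝ) ⬝ᵥ d - (gbar : Fin m → ℝ) ⬝ᵥ d := by
      simp [dotProduct, sub_mul, Finset.sum_sub_distrib]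
    simp only [deltaM]
    rw [hsub]
    ring
  rw [key]
  calc |_ + (‖c‖ - ‖cbar‖) - _| ≤
      |(-(τ * ((g - gbar) ⬝ᵥ (d : Fin m → ℝ))))| + |‖c‖ - ‖cbar‖|
        + |‖c + toEuc (J.mulVec d)‖ - ‖cbar + toEuc (Jbar.mulVec d)‖| := by
        exact (abs_sub _ _).trans (by gcongr; exact abs_add_le _ _)
    _ ≤ τ * εg * (εd + ‖dbar‖) + εc + (εc + εJ * (εd + ‖dbar‖)) := by
        rw [abs_neg]; gcongr
    _ = τ * εg * εd + 2 * εc + εJ * εd + (τ * εg + εJ) * ‖dbar‖ := by ring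
end

section
/- Let f₀ : ℝⁿ → ℝ be differentiable with ‖∇f₀(x) − ∇f₀(x')‖ ≤ L_g ‖x − x'‖ for all x, x' ∈ ℝⁿ, and let c_I : ℝⁿ → ℝ^q be differentiable with Jacobian J_I satisfying ‖J_I(x) − J_I(x')‖ ≤ L_J ‖x − x'‖ for all x, x' ∈ ℝⁿ. Let τ > 0, μ > 0, η_s ∈ (0, 1), x ∈ ℝⁿ, s ∈ ℝ^q with s⁽ⁱ⁾ > 0 for all i, and dˣ ∈ ℝⁿ, dˢ ∈ ℝ^q. Then for every α ∈ (0, 1] with α (dˢ)⁽ⁱ⁾ ≥ −η_s for all i, one has φ̄(x + α dˣ, s + α S dˢ, τ) − φ̄(x, s, τ) ≤ −α Δm̄ + ξ₀(τ) α² (‖dˣ‖² + ‖dˢ‖²), where ξ₀(τ) := max{(1/2)(τ L_g + L_J), τ μ / (1 − η_s)}. -/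
open Matrix
open scoped Matrix.Norms.L2Operator

section aux
lemma log_ineq' {ηs t : ℝ} (hηs1 : ηs < 1) (ht : -ηs ≤ t) :
    -Real.log (1 + t) + t ≤ t ^ 2 / (1 - ηs) := by
  have h1 : (0:ℝ) < 1 - ηs := by linarith
  have h2 : (0:ℝ) < 1 + t := by linarith
  have h3 : Real.log ((1 + t)⁻¹) ≤ (1 + t)⁻¹ - 1 :=
    Real.log_le_sub_one_of_pos (by positivity)
  rw [Real.log_inv] at h3
  have e1 : (1 + t)⁻¹ - 1 = -t / (1 + t) := by field_simp; ring
  have e2 : -t / (1 + t) + t = t ^ 2 / (1 + t) := by field_simp; ring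
  have h4 : -Real.log (1 + t) + t ≤ t ^ 2 / (1 + t) := by
    rw [e1] at h3; linarith
  have h5 : t ^ 2 / (1 + t) ≤ t ^ 2 / (1 - ηs) := by
    rw [div_le_div_iff₀ h2 h1]
    nlinarith [sq_nonneg t]
  linarith

lemma descent_scalar {n : ℕ} (f : EuclideanSpace ℝ (Fin n) → ℝ)
    (g : EuclideanSpace ℝ (Fin n) → EuclideanSpace ℝ (Fin n)) (L : ℝ)
    (hgrad : ∀ x, HasGradientAt f (g x) x)
    (hL : ∀ x x', ‖g x - g x'‖ ≤ L * ‖x - x'‖)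
    (x dx : EuclideanSpace ℝ (Fin n)) (α : ℝ) (hα : 0 ≤ α) :
    f (x + α • dx) - f x ≤ α * (inner ℝ (g x) dx : ℝ) + L / 2 * α ^ 2 * ‖dx‖ ^ 2 := by
  rcases eq_or_ne dx 0 with h | h
  · simp [h]
  have hdx : (0:ℝ) < ‖dx‖ := norm_pos_iff.mpr h
  have hL0 : 0 ≤ L := by
    have h1 := hL (x + dx) x
    have h2 : ‖(x + dx) - x‖ = ‖dx‖ := by rw [add_sub_cancel_left]
    rw [h2] at h1
    nlinarith [norm_nonneg (g (x + dx) - g x)]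
  have hgc : Continuous g := by
    refine (LipschitzWith.of_dist_le_mul (K := ⟨L, hL0⟩) ?_).continuous
    intro a b; rw [dist_eq_norm, dist_eq_norm]; exact hL a b
  have hcurve : Continuous fun t : ℝ => x + t • dx := by continuity
  have hline : ∀ t : ℝ, HasDerivAt (fun u : ℝ => x + u • dx) dx t := fun t => by
    simpa using ((hasDerivAt_id t).smul_const dx).const_add x
  have hψ : ∀ t : ℝ, HasDerivAt (fun u => f (x + u • dx))
      (inner ℝ (g (x + t • dx)) dx : ℝ) t := by
    intro t
    have := ((hgrad (x + t • dx)).hasFDerivAt.comp_hasDerivAt t (hline t))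
    simp at this; exact this
  have hcont : Continuous fun t : ℝ => (inner ℝ (g (x + t • dx)) dx : ℝ) :=
    (hgc.comp hcurve).inner continuous_const
  have hFTC : ∫ t in (0:ℝ)..α, (inner ℝ (g (x + t • dx)) dx : ℝ) = f (x + α • dx) - f x := by
    have := intervalIntegral.integral_eq_sub_of_hasDerivAt (a := 0) (b := α)
      (fun t _ => hψ t) (hcont.intervalIntegrable 0 α)
    simpa using this
  have hcont2 : Continuous fun t : ℝ => (inner ℝ (g x) dx : ℝ) + L * t * ‖dx‖ ^ 2 := by
    continuity
  have hmono : ∫ t in (0:ℝ)..α, (inner ℝ (g (x + t • dx)) dx : ℝ) ≤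
      ∫ t in (0:ℝ)..α, ((inner ℝ (g x) dx : ℝ) + L * t * ‖dx‖ ^ 2) := by
    refine intervalIntegral.integral_mono_on hα (hcont.intervalIntegrable 0 α)
      (hcont2.intervalIntegrable 0 α) ?_
    intro t ht
    have h1 : (inner ℝ (g (x + t • dx)) dx : ℝ) - inner ℝ (g x) dx
        = inner ℝ (g (x + t • dx) - g x) dx := (inner_sub_left _ _ _).symm
    have h2 : (inner ℝ (g (x + t • dx) - g x) dx : ℝ) ≤ ‖g (x + t • dx) - g x‖ * ‖dx‖ :=
      real_inner_le_norm _ _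
    have h3 : ‖g (x + t • dx) - g x‖ ≤ L * (t * ‖dx‖) := by
      have h4 := hL (x + t • dx) x
      have he : ‖(x + t • dx) - x‖ = t * ‖dx‖ := by
        rw [add_sub_cancel_left, norm_smul, Real.norm_eq_abs, abs_of_nonneg ht.1]
      rw [he] at h4; linarith
    nlinarith [mul_le_mul_of_nonneg_right h3 (norm_nonneg dx)]
  have hval : ∫ t in (0:ℝ)..α, ((inner ℝ (g x) dx : ℝ) + L * t * ‖dx‖ ^ 2)
      = α * (inner ℝ (g x) dx : ℝ) + L / 2 * α ^ 2 * ‖dx‖ ^ 2 := by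
    have e : ∫ t in (0:ℝ)..α, ((inner ℝ (g x) dx : ℝ) + L * t * ‖dx‖ ^ 2)
        = ∫ t in (0:ℝ)..α, ((inner ℝ (g x) dx : ℝ) + (L * ‖dx‖ ^ 2) * t) := by
      congr 1; ext t; ring
    rw [e, intervalIntegral.integral_add intervalIntegrable_const
      (intervalIntegral.intervalIntegrable_id.const_mul _),
      intervalIntegral.integral_const, intervalIntegral.integral_const_mul, integral_id]
    simp; ring
  linarith

lemma taylor_vec {n q : ℕ} (cI : EuclideanSpace ℝ (Fin n) → EuclideanSpace ℝ (Fin q))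
    (JI : EuclideanSpace ℝ (Fin n) → Matrix (Fin q) (Fin n) ℝ) (L : ℝ)
    (hJac : ∀ x, HasFDerivAt cI
      (LinearMap.toContinuousLinearMap (Matrix.toEuclideanLin (JI x))) x)
    (hL : ∀ x x', ‖JI x - JI x'‖ ≤ L * ‖x - x'‖)
    (x dx : EuclideanSpace ℝ (Fin n)) (α : ℝ) (hα : 0 ≤ α) :
    ‖cI (x + α • dx) - cI x - α • (Matrix.toEuclideanLin (JI x) dx)‖
      ≤ L / 2 * α ^ 2 * ‖dx‖ ^ 2 := by
  rcases eq_or_ne dx 0 with h | h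
  · simp [h]
  have hdx : (0:ℝ) < ‖dx‖ := norm_pos_iff.mpr h
  have hL0 : 0 ≤ L := by
    have h1 := hL (x + dx) x
    have h2 : ‖(x + dx) - x‖ = ‖dx‖ := by rw [add_sub_cancel_left]
    rw [h2] at h1
    nlinarith [norm_nonneg (JI (x + dx) - JI x)]
  set F : EuclideanSpace ℝ (Fin n) → EuclideanSpace ℝ (Fin q) :=
    fun z => Matrix.toEuclideanLin (JI z) dx with hF
  have hFdiff : ∀ a b, ‖F a - F b‖ ≤ (L * ‖dx‖) * ‖a - b‖ := by
    intro a b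
    have h1 : F a - F b = Matrix.toEuclideanLin (JI a - JI b) dx := by
      simp [hF, map_sub, LinearMap.sub_apply]
    rw [h1]
    calc ‖Matrix.toEuclideanLin (JI a - JI b) dx‖ ≤ ‖JI a - JI b‖ * ‖dx‖ :=
          (JI a - JI b).l2_opNorm_mulVec dx
      _ ≤ (L * ‖a - b‖) * ‖dx‖ := mul_le_mul_of_nonneg_right (hL a b) (norm_nonneg dx)
      _ = (L * ‖dx‖) * ‖a - b‖ := by ring
  have hFc : Continuous F := by
    refine (LipschitzWith.of_dist_le_mul (K := Real.toNNReal (L * ‖dx‖)) ?_).continuous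
    intro a b
    rw [dist_eq_norm, dist_eq_norm, Real.coe_toNNReal _ (by positivity)]
    exact hFdiff a b
  have hcurve : Continuous fun t : ℝ => x + t • dx := by continuity
  have hline : ∀ t : ℝ, HasDerivAt (fun u : ℝ => x + u • dx) dx t := fun t => by
    simpa using ((hasDerivAt_id t).smul_const dx).const_add x
  have hψ : ∀ t : ℝ, HasDerivAt (fun u => cI (x + u • dx)) (F (x + t • dx)) t := by
    intro t
    have := (hJac (x + t • dx)).comp_hasDerivAt t (hline t)
    exact this
  have hcont : Continuous fun t : ℝ => F (x + t • dx) := hFc.comp hcurve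
  have hFTC : ∫ t in (0:ℝ)..α, F (x + t • dx) = cI (x + α • dx) - cI x := by
    have := intervalIntegral.integral_eq_sub_of_hasDerivAt (a := 0) (b := α)
      (fun t _ => hψ t) (hcont.intervalIntegrable 0 α)
    simpa using this
  have hsub : cI (x + α • dx) - cI x - α • F x
      = ∫ t in (0:ℝ)..α, (F (x + t • dx) - F x) := by
    rw [intervalIntegral.integral_sub (hcont.intervalIntegrable 0 α)
      (intervalIntegrable_const), hFTC, intervalIntegral.integral_const]
    simp
  rw [hsub]
  have hbd : ‖∫ t in (0:ℝ)..α, (F (x + t • dx) - F x)‖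
      ≤ |∫ t in (0:ℝ)..α, L * t * ‖dx‖ ^ 2| := by
    refine intervalIntegral.norm_integral_le_abs_of_norm_le ?_ ?_
    · have huIoc : Set.uIoc (0:ℝ) α = Set.Ioc 0 α := Set.uIoc_of_le hα
      filter_upwards [MeasureTheory.ae_restrict_mem measurableSet_uIoc] with t ht
      rw [huIoc] at ht
      have h1 : ‖F (x + t • dx) - F x‖ ≤ (L * ‖dx‖) * ‖(x + t • dx) - x‖ :=
        hFdiff _ _
      have he : ‖(x + t • dx) - x‖ = t * ‖dx‖ := by
        rw [add_sub_cancel_left, norm_smul, Real.norm_eq_abs, abs_of_nonneg ht.1.le]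
      rw [he] at h1
      calc ‖F (x + t • dx) - F x‖ ≤ (L * ‖dx‖) * (t * ‖dx‖) := h1
        _ = L * t * ‖dx‖ ^ 2 := by ring
    · exact ((continuous_const.mul continuous_id).mul continuous_const).intervalIntegrable 0 α
  have hval : ∫ t in (0:ℝ)..α, L * t * ‖dx‖ ^ 2 = L / 2 * α ^ 2 * ‖dx‖ ^ 2 := by
    have e : ∫ t in (0:ℝ)..α, L * t * ‖dx‖ ^ 2
        = ∫ t in (0:ℝ)..α, (L * ‖dx‖ ^ 2) * t := by
      congr 1; ext t; ring
    rw [e, intervalIntegral.integral_const_mul, integral_id]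
    ring
  rw [hval] at hbd
  calc ‖∫ t in (0:ℝ)..α, (F (x + t • dx) - F x)‖ ≤ |L / 2 * α ^ 2 * ‖dx‖ ^ 2| := hbd
    _ = L / 2 * α ^ 2 * ‖dx‖ ^ 2 := abs_of_nonneg (by positivity)

lemma norm_convex_comb {E : Type*} [NormedAddCommGroup E] [NormedSpace ℝ E]
    (u v : E) {α : ℝ} (h0 : 0 ≤ α) (h1 : α ≤ 1) :
    ‖(1 - α) • u + α • v‖ ≤ (1 - α) * ‖u‖ + α * ‖v‖ := by
  calc ‖(1 - α) • u + α • v‖ ≤ ‖(1 - α) • u‖ + ‖α • v‖ := norm_add_le _ _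
    _ = (1 - α) * ‖u‖ + α * ‖v‖ := by
        rw [norm_smul, norm_smul, Real.norm_eq_abs, Real.norm_eq_abs,
          abs_of_nonneg (by linarith), abs_of_nonneg h0]

end aux

/-- Decrease of the barrier merit function along a scaled step (Lemma on `φ̄`):
if `f₀` has an `L_g`-Lipschitz gradient `g₀`, `c_I` has an `L_J`-Lipschitz Jacobian `J_I`,
`s` has positive components, and `α ∈ (0,1]` satisfies the fraction-to-the-boundary rule
`α dˢᵢ ≥ −η_s` for all `i`, then
`φ̄(x + α dˣ, s + α S dˢ, τ) − φ̄(x, s, τ) ≤ −α Δm̄ + ξ₀(τ) α² (‖dˣ‖² + ‖dˢ‖²)`,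
where `φ̄(x, s, τ) = τ (f₀(x) − μ ∑ᵢ log sᵢ) + ‖c_I(x) + s‖`,
`Δm̄ = −τ (g₀(x)ᵀdˣ − μ eᵀdˢ) + ‖c_I(x) + s‖ − ‖c_I(x) + s + J_I(x) dˣ + S dˢ‖`, and
`ξ₀(τ) = max{(1/2)(τ L_g + L_J), τ μ/(1 − η_s)}`. -/
theorem stmt14 (n q : ℕ)
    (f₀ : EuclideanSpace ℝ (Fin n) → ℝ)
    (g₀ : EuclideanSpace ℝ (Fin n) → EuclideanSpace ℝ (Fin n))
    (cI : EuclideanSpace ℝ (Fin n) → EuclideanSpace ℝ (Fin q))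
    (JI : EuclideanSpace ℝ (Fin n) → Matrix (Fin q) (Fin n) ℝ)
    (Lg LJ : ℝ)
    (hgrad : ∀ x, HasGradientAt f₀ (g₀ x) x)
    (hLg : ∀ x x', ‖g₀ x - g₀ x'‖ ≤ Lg * ‖x - x'‖)
    (hJac : ∀ x, HasFDerivAt cI
      (LinearMap.toContinuousLinearMap (Matrix.toEuclideanLin (JI x))) x)
    (hLJ : ∀ x x', ‖JI x - JI x'‖ ≤ LJ * ‖x - x'‖)
    (τ μ ηs : ℝ) (hτ : 0 < τ) (hμ : 0 < μ) (hηs0 : 0 < ηs) (hηs1 : ηs < 1)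
    (x : EuclideanSpace ℝ (Fin n)) (s : EuclideanSpace ℝ (Fin q))
    (hs : ∀ i, 0 < s i)
    (dx : EuclideanSpace ℝ (Fin n)) (ds : EuclideanSpace ℝ (Fin q))
    (α : ℝ) (hα0 : 0 < α) (hα1 : α ≤ 1) (hftb : ∀ i, -ηs ≤ α * ds i) :
    (τ * (f₀ (x + α • dx) - μ * ∑ i, Real.log ((s + α • toEuc (fun i => s i * ds i)) i))
        + ‖cI (x + α • dx) + (s + α • toEuc (fun i => s i * ds i))‖)
      - (τ * (f₀ x - μ * ∑ i, Real.log (s i)) + ‖cI x + s‖)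
    ≤ -α * (-(τ * ((g₀ x ⬝ᵥ dx) - μ * ∑ i, ds i)) + ‖cI x + s‖
            - ‖cI x + s + toEuc ((JI x).mulVec dx) + toEuc (fun i => s i * ds i)‖)
      + max ((1 / 2) * (τ * Lg + LJ)) (τ * μ / (1 - ηs)) * α ^ 2
          * (‖dx‖ ^ 2 + ‖ds‖ ^ 2) := by
  have h1ηs : (0:ℝ) < 1 - ηs := by linarith
  set Sds : EuclideanSpace ℝ (Fin q) := toEuc (fun i => s i * ds i) with hSds
  set Jv : EuclideanSpace ℝ (Fin q) := toEuc ((JI x).mulVec dx) with hJv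
  set ξ : ℝ := max ((1 / 2) * (τ * Lg + LJ)) (τ * μ / (1 - ηs)) with hξ
  set y : EuclideanSpace ℝ (Fin n) := x + α • dx with hy
  set s' : EuclideanSpace ℝ (Fin q) := s + α • Sds with hs'
  -- inner product = dot product
  have hdot : (inner ℝ (g₀ x) dx : ℝ) = g₀ x ⬝ᵥ dx := by
    simp [PiLp.inner_apply, RCLike.inner_apply, dotProduct, mul_comm]
  -- norms squared as sums
  have hnds : ‖ds‖ ^ 2 = ∑ i, ds i ^ 2 := by
    rw [EuclideanSpace.norm_eq, Real.sq_sqrt (by positivity)]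
    simp [Real.norm_eq_abs, sq_abs]
  -- Step A : descent for f₀
  have hA : f₀ y - f₀ x ≤ α * (g₀ x ⬝ᵥ dx) + Lg / 2 * α ^ 2 * ‖dx‖ ^ 2 := by
    have := descent_scalar f₀ g₀ Lg hgrad hLg x dx α hα0.le
    rw [hdot] at this
    exact this
  -- Step B : log part
  have hB : (∑ i, Real.log (s i)) - (∑ i, Real.log (s' i))
      ≤ -(α * ∑ i, ds i) + α ^ 2 / (1 - ηs) * ‖ds‖ ^ 2 := by
    have hterm : ∀ i ∈ (Finset.univ : Finset (Fin q)),
        Real.log (s i) - Real.log (s' i)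
          ≤ -(α * ds i) + (α * ds i) ^ 2 / (1 - ηs) := by
      intro i _
      have hsi := hs i
      have hpos : (0:ℝ) < 1 + α * ds i := by have := hftb i; linarith
      have happ : s' i = s i * (1 + α * ds i) := by
        simp only [hs', hSds, toEuc, PiLp.add_apply, PiLp.smul_apply, smul_eq_mul]
        show s i + α * (s i * ds i) = _
        ring
      rw [happ, Real.log_mul (ne_of_gt hsi) (ne_of_gt hpos)]
      have := log_ineq' hηs1 (hftb i)
      linarith
    have hsum := Finset.sum_le_sum hterm
    rw [Finset.sum_sub_distrib] at hsum
    have e2 : ∑ i, (-(α * ds i) + (α * ds i) ^ 2 / (1 - ηs))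
        = -(α * ∑ i, ds i) + α ^ 2 / (1 - ηs) * ∑ i, ds i ^ 2 := by
      rw [Finset.sum_add_distrib]
      congr 1
      · rw [Finset.mul_sum, Finset.sum_neg_distrib]
      · rw [Finset.mul_sum]; exact Finset.sum_congr rfl fun i _ => by ring
    rw [e2] at hsum
    rw [hnds]
    exact hsum
  -- Step C : constraint norm part
  have hJv' : Jv = Matrix.toEuclideanLin (JI x) dx := rfl
  have hTay : ‖cI y - cI x - α • Jv‖ ≤ LJ / 2 * α ^ 2 * ‖dx‖ ^ 2 := by
    rw [hJv']
    exact taylor_vec cI JI LJ hJac hLJ x dx α hα0.le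
  have hC1 : ‖cI y + s'‖ ≤ ‖(1 - α) • (cI x + s) + α • (cI x + s + Jv + Sds)‖
      + LJ / 2 * α ^ 2 * ‖dx‖ ^ 2 := by
    have e : cI y + s' = ((1 - α) • (cI x + s) + α • (cI x + s + Jv + Sds))
        + (cI y - cI x - α • Jv) := by
      rw [hs']; module
    rw [e]
    exact (norm_add_le _ _).trans (by linarith [hTay])
  have hC2 : ‖(1 - α) • (cI x + s) + α • (cI x + s + Jv + Sds)‖
      ≤ (1 - α) * ‖cI x + s‖ + α * ‖cI x + s + Jv + Sds‖ :=
    norm_convex_comb _ _ hα0.le hα1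
  -- coefficients vs ξ
  have hξ1 : (1 / 2) * (τ * Lg + LJ) ≤ ξ := le_max_left _ _
  have hξ2 : τ * μ / (1 - ηs) ≤ ξ := le_max_right _ _
  have p1 : (1 / 2) * (τ * Lg + LJ) * (α ^ 2 * ‖dx‖ ^ 2) ≤ ξ * (α ^ 2 * ‖dx‖ ^ 2) :=
    mul_le_mul_of_nonneg_right hξ1 (by positivity)
  have p2 : τ * μ / (1 - ηs) * (α ^ 2 * ‖ds‖ ^ 2) ≤ ξ * (α ^ 2 * ‖ds‖ ^ 2) :=
    mul_le_mul_of_nonneg_right hξ2 (by positivity)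
  have q1 : τ * (f₀ y - f₀ x) ≤ τ * (α * (g₀ x ⬝ᵥ dx) + Lg / 2 * α ^ 2 * ‖dx‖ ^ 2) :=
    mul_le_mul_of_nonneg_left hA hτ.le
  have q2 : τ * μ * ((∑ i, Real.log (s i)) - ∑ i, Real.log (s' i))
      ≤ τ * μ * (-(α * ∑ i, ds i) + α ^ 2 / (1 - ηs) * ‖ds‖ ^ 2) :=
    mul_le_mul_of_nonneg_left hB (by positivity)
  have q2' : τ * μ * ((∑ i, Real.log (s i)) - ∑ i, Real.log (s' i))
      ≤ τ * μ * (-(α * ∑ i, ds i)) + τ * μ / (1 - ηs) * (α ^ 2 * ‖ds‖ ^ 2) := by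
    have hdiv : τ * μ * (-(α * ∑ i, ds i) + α ^ 2 / (1 - ηs) * ‖ds‖ ^ 2)
        = τ * μ * (-(α * ∑ i, ds i)) + τ * μ / (1 - ηs) * (α ^ 2 * ‖ds‖ ^ 2) := by ring
    linarith [q2]
  linarith [hC1, hC2, q1, q2', p1, p2]
end

section
/- Let W be a real m×m symmetric matrix, J a real q×m matrix, c ∈ ℝ^q, u, v ∈ ℝ^m, and d := u + v. Let τ > 0, σ ∈ (0, 1), σ_W > 0, ξ₁ > 0, ω > 0, and C > 0, and suppose: uᵀ W u ≥ σ_W ‖u‖²; ‖v‖ ≤ ω ‖Jᵀc‖; ‖c + Jv‖ ≤ ‖c‖; ‖c‖(‖c‖ − ‖c + Jv‖) ≥ ξ₁ ‖Jᵀc‖²; and ‖c‖ ≤ C. Then, for any real number Δ with Δ ≥ (1/2) τ uᵀ W u + σ(‖c‖ − ‖c + Jv‖), one has Δ ≥ min{σ_W/2, σ ξ₁ / C} (τ ‖u‖² + ‖Jᵀc‖²), and moreover ‖d‖² ≤ 2 max{1, ω²} (‖u‖² + ‖Jᵀc‖²). -/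
set_option maxHeartbeats 1000000
open Matrix
open scoped Matrix.Norms.L2Operator

/-- Let `W` be symmetric `m × m`, `J` a `q × m` matrix, `c ∈ ℝ^q`, `u, v ∈ ℝ^m`,
`d := u + v`, with `uᵀ W u ≥ σ_W ‖u‖²`, `‖v‖ ≤ ω ‖Jᵀc‖`, `‖c + Jv‖ ≤ ‖c‖`,
`‖c‖(‖c‖ − ‖c + Jv‖) ≥ ξ₁ ‖Jᵀc‖²`, and `‖c‖ ≤ C`.  Then any
`Δ ≥ (1/2) τ uᵀ W u + σ (‖c‖ − ‖c + Jv‖)` satisfies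
`Δ ≥ min{σ_W/2, σ ξ₁/C} (τ ‖u‖² + ‖Jᵀc‖²)`, and
`‖d‖² ≤ 2 max{1, ω²} (‖u‖² + ‖Jᵀc‖²)`. -/
theorem stmt15 (q m : ℕ) (W : Matrix (Fin m) (Fin m) ℝ) (hW : W.IsSymm)
    (J : Matrix (Fin q) (Fin m) ℝ) (c : EuclideanSpace ℝ (Fin q))
    (u v : EuclideanSpace ℝ (Fin m))
    (τ σ σW ξ₁ ω C : ℝ) (hτ : 0 < τ) (hσ0 : 0 < σ) (hσ1 : σ < 1) (hσW : 0 < σW)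
    (hξ₁ : 0 < ξ₁) (hω : 0 < ω) (hC : 0 < C)
    (hWu : σW * ‖u‖ ^ 2 ≤ u ⬝ᵥ W.mulVec u)
    (hv : ‖v‖ ≤ ω * ‖toEuc (Jᵀ.mulVec c)‖)
    (hdec : ‖c + toEuc (J.mulVec v)‖ ≤ ‖c‖)
    (hcauchy : ξ₁ * ‖toEuc (Jᵀ.mulVec c)‖ ^ 2 ≤ ‖c‖ * (‖c‖ - ‖c + toEuc (J.mulVec v)‖))
    (hcC : ‖c‖ ≤ C)
    (Δ : ℝ) (hΔ : (1 / 2) * τ * (u ⬝ᵥ W.mulVec u) + σ * (‖c‖ - ‖c + toEuc (J.mulVec v)‖) ≤ Δ) :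
    min (σW / 2) (σ * ξ₁ / C) * (τ * ‖u‖ ^ 2 + ‖toEuc (Jᵀ.mulVec c)‖ ^ 2) ≤ Δ ∧
      ‖u + v‖ ^ 2 ≤ 2 * max 1 (ω ^ 2) * (‖u‖ ^ 2 + ‖toEuc (Jᵀ.mulVec c)‖ ^ 2) := by
  set A := ‖u‖ with hA
  set B := ‖toEuc (Jᵀ.mulVec c)‖ with hB
  have hA0 : 0 ≤ A := norm_nonneg _
  have hB0 : 0 ≤ B := norm_nonneg _
  have hgap0 : 0 ≤ ‖c‖ - ‖c + toEuc (J.mulVec v)‖ := sub_nonneg.2 hdec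
  constructor
  · have h2 : σ * ξ₁ * B ^ 2 ≤ σ * C * (‖c‖ - ‖c + toEuc (J.mulVec v)‖) := by
      have : ‖c‖ * (‖c‖ - ‖c + toEuc (J.mulVec v)‖) ≤ C * (‖c‖ - ‖c + toEuc (J.mulVec v)‖) :=
        mul_le_mul_of_nonneg_right hcC hgap0
      nlinarith [hcauchy]
    have h2' : σ * ξ₁ / C * B ^ 2 ≤ σ * (‖c‖ - ‖c + toEuc (J.mulVec v)‖) := by
      rw [div_mul_eq_mul_div, div_le_iff₀ hC]
      nlinarith
    have hm1 : min (σW / 2) (σ * ξ₁ / C) ≤ σW / 2 := min_le_left _ _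
    have hm2 : min (σW / 2) (σ * ξ₁ / C) ≤ σ * ξ₁ / C := min_le_right _ _
    have h1 : (1 / 2 : ℝ) * τ * (σW * A ^ 2) ≤ (1 / 2) * τ * (u ⬝ᵥ W.mulVec u) := by
      nlinarith [hWu]
    nlinarith [mul_le_mul_of_nonneg_right hm1 (mul_nonneg hτ.le (sq_nonneg A)),
      mul_le_mul_of_nonneg_right hm2 (sq_nonneg B)]
  · have htri : ‖u + v‖ ≤ A + ‖v‖ := norm_add_le _ _
    have hv0 : (0:ℝ) ≤ ‖v‖ := norm_nonneg _
    have hd0 : (0:ℝ) ≤ ‖u + v‖ := norm_nonneg _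
    have h1 : (1:ℝ) ≤ max 1 (ω ^ 2) := le_max_left _ _
    have h2 : ω ^ 2 ≤ max 1 (ω ^ 2) := le_max_right _ _
    set D := ‖u + v‖ with hD
    set V := ‖v‖ with hV
    clear_value A B D V
    clear hWu hΔ hcauchy hdec hcC hW hgap0 hA hB hD hV
    clear W J c u v Δ
    have hv2 : V ^ 2 ≤ ω ^ 2 * B ^ 2 := by nlinarith [mul_le_mul hv hv hv0 (mul_nonneg hω.le hB0)]
    have hsq : D ^ 2 ≤ (A + V) ^ 2 := by nlinarith
    have hstep : D ^ 2 ≤ 2 * A ^ 2 + 2 * V ^ 2 := by nlinarith [sq_nonneg (A - V)]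
    have hfin : 2 * A ^ 2 + 2 * (ω ^ 2 * B ^ 2) ≤ 2 * max 1 (ω ^ 2) * (A ^ 2 + B ^ 2) := by
      nlinarith [mul_le_mul_of_nonneg_right h1 (sq_nonneg A), mul_le_mul_of_nonneg_right h2 (sq_nonneg B)]
    linarith
end

section
/- Let W be a real m×m symmetric matrix, J a real q×m matrix, and u, v, g ∈ ℝ^m, y ∈ ℝ^q such that J u = 0, uᵀ W u ≥ 0, and W(u + v) + g + Jᵀ y = 0. Then gᵀ(u + v) + (1/2) uᵀ W u ≤ (‖g‖ + ‖W‖ ‖u‖) ‖v‖. -/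
open Matrix
open scoped Matrix.Norms.L2Operator

lemma dot_le_norms {m : ℕ} (a b : Fin m → ℝ) : a ⬝ᵥ b ≤ ‖toEuc a‖ * ‖toEuc b‖ := by
  have h : a ⬝ᵥ b = inner (𝕜 := ℝ) (toEuc a) (toEuc b) := by
    simp [dotProduct, PiLp.inner_apply, toEuc, RCLike.inner_apply, mul_comm]
  rw [h]
  exact real_inner_le_norm _ _

/-- Let `W` be a real symmetric `m × m` matrix, `J` a real `q × m` matrix, and
`u, v, g ∈ ℝ^m`, `y ∈ ℝ^q` with `J u = 0`, `uᵀ W u ≥ 0`, and `W(u + v) + g + Jᵀ y = 0`.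
Then `gᵀ(u + v) + (1/2) uᵀ W u ≤ (‖g‖ + ‖W‖ ‖u‖) ‖v‖`. -/
theorem stmt18 (q m : ℕ) (W : Matrix (Fin m) (Fin m) ℝ) (hW : W.IsSymm)
    (J : Matrix (Fin q) (Fin m) ℝ)
    (u v g : Fin m → ℝ) (y : Fin q → ℝ)
    (hJu : J.mulVec u = 0) (hWu : 0 ≤ u ⬝ᵥ W.mulVec u)
    (heq : W.mulVec (u + v) + g + Jᵀ.mulVec y = 0) :
    g ⬝ᵥ (u + v) + (1 / 2) * (u ⬝ᵥ W.mulVec u) ≤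
      (‖toEuc g‖ + ‖W‖ * ‖toEuc u‖) * ‖toEuc v‖ := by
  -- dot heq with u
  have hdot : u ⬝ᵥ (W.mulVec (u + v) + g + Jᵀ.mulVec y) = 0 := by
    rw [heq, dotProduct_zero]
  have hJy : u ⬝ᵥ Jᵀ.mulVec y = 0 := by
    rw [Matrix.dotProduct_mulVec, Matrix.vecMul_transpose, hJu, zero_dotProduct]
  have hsym : u ⬝ᵥ W.mulVec v = (W.mulVec u) ⬝ᵥ v := by
    rw [Matrix.dotProduct_mulVec]
    conv_lhs => rw [← hW.eq, Matrix.vecMul_transpose]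
  have hgu : g ⬝ᵥ u = -(u ⬝ᵥ W.mulVec u) - (W.mulVec u) ⬝ᵥ v := by
    have := hdot
    rw [Matrix.mulVec_add] at this
    simp only [dotProduct_add, hJy, add_zero] at this
    rw [dotProduct_comm g u]
    linarith [hsym]
  have hgv : g ⬝ᵥ v ≤ ‖toEuc g‖ * ‖toEuc v‖ := dot_le_norms g v
  have hWuv : -((W.mulVec u) ⬝ᵥ v) ≤ (‖W‖ * ‖toEuc u‖) * ‖toEuc v‖ := by
    have h1 : (-(W.mulVec u)) ⬝ᵥ v ≤ ‖toEuc (-(W.mulVec u))‖ * ‖toEuc v‖ :=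
      dot_le_norms _ v
    have h2 : ‖toEuc (-(W.mulVec u))‖ = ‖toEuc (W.mulVec u)‖ := by
      rw [show toEuc (-(W.mulVec u)) = -toEuc (W.mulVec u) from rfl, norm_neg]
    have h3 : ‖toEuc (W.mulVec u)‖ ≤ ‖W‖ * ‖toEuc u‖ := W.l2_opNorm_mulVec (toEuc u)
    have h4 : (-(W.mulVec u)) ⬝ᵥ v = -((W.mulVec u) ⬝ᵥ v) := by
      simp [neg_dotProduct]
    nlinarith [norm_nonneg (toEuc v)]
  have hexp : g ⬝ᵥ (u + v) = g ⬝ᵥ u + g ⬝ᵥ v := dotProduct_add g u v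
  rw [hexp, hgu, add_mul]
  linarith
end

section
/- Let τ > 0 and μ > 0, let a ∈ ℝ^q, and let s ∈ ℝ^q have s⁽ⁱ⁾ > 0 for all i. Define s' ∈ ℝ^q componentwise by (s')⁽ⁱ⁾ := max{s⁽ⁱ⁾, −a⁽ⁱ⁾}. Then s' has positive components and −τ μ Σ_{i=1}^q log (s')⁽ⁱ⁾ + ‖a + s'‖ ≤ −τ μ Σ_{i=1}^q log s⁽ⁱ⁾ + ‖a + s‖. -/
/-- Slack reset does not increase the barrier merit function: for `τ, μ > 0`, `a ∈ ℝ^q`,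
and `s ∈ ℝ^q` with positive components, the vector `s'` with `s'ᵢ := max{sᵢ, −aᵢ}` has
positive components and
`−τμ ∑ᵢ log s'ᵢ + ‖a + s'‖ ≤ −τμ ∑ᵢ log sᵢ + ‖a + s‖` (Euclidean norm). -/
theorem stmt19 (q : ℕ) (τ μ : ℝ) (hτ : 0 < τ) (hμ : 0 < μ)
    (a : EuclideanSpace ℝ (Fin q)) (s : EuclideanSpace ℝ (Fin q)) (hs : ∀ i, 0 < s i) :
    (∀ i, 0 < max (s i) (-a i)) ∧
      -(τ * μ) * ∑ i, Real.log (max (s i) (-a i))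
          + ‖a + toEuc (fun i => max (s i) (-a i))‖ ≤
        -(τ * μ) * ∑ i, Real.log (s i) + ‖a + s‖ := by
  refine ⟨fun i => lt_of_lt_of_le (hs i) (le_max_left _ _), ?_⟩
  have hlog : ∑ i, Real.log (s i) ≤ ∑ i, Real.log (max (s i) (-a i)) :=
    Finset.sum_le_sum fun i _ => Real.log_le_log (hs i) (le_max_left _ _)
  have hnorm : ‖a + toEuc (fun i => max (s i) (-a i))‖ ≤ ‖a + s‖ := by
    rw [EuclideanSpace.norm_eq, EuclideanSpace.norm_eq]
    apply Real.sqrt_le_sqrt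
    apply Finset.sum_le_sum
    intro i _
    simp only [toEuc, PiLp.add_apply, PiLp.toLp_apply]
    have h1 : a i + max (s i) (-a i) = max (a i + s i) 0 := by
      rcases le_total (s i) (-a i) with h | h
      · rw [max_eq_right h, max_eq_right (by linarith)]; ring
      · rw [max_eq_left h, max_eq_left (by linarith)]
    rw [h1]
    have : |max (a i + s i) 0| ≤ |a i + s i| := by
      rw [abs_of_nonneg (le_max_right _ _)]
      exact le_trans (max_le (le_abs_self _) (abs_nonneg _)) le_rfl
    calc |max (a i + s i) 0| ^ 2 ≤ |a i + s i| ^ 2 := by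
          exact pow_le_pow_left₀ (abs_nonneg _) this 2
      _ = |a i + s i| ^ 2 := rfl
  have hmul : -(τ * μ) * ∑ i, Real.log (max (s i) (-a i)) ≤
      -(τ * μ) * ∑ i, Real.log (s i) := by
    apply mul_le_mul_of_nonpos_left hlog
    nlinarith
  linarith
end
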